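/- arXiv:2302.12857 — 2 statements merged into one kernel-verified Lean document; each statement's English description precedes it below -/
import Mathlib

section
/- Let Ñ be a prime and a₀, a₁, a₂, a₃ : ℤ/Ñℤ → ℂ functions with ‖a_i‖_∞ ≤ 1, and let l₁, l₂, l₃ be distinct positive integers with l₁+l₂+l₃ < Ñ. Then |𝔼_{m,n ∈ ℤ/Ñℤ} a₀(m) a₁(m+l₁n) a₂(m+l₂n) a₃(m+l₃n)| ≤ min_{0≤j≤3} ‖a_j‖_{U³(ℤ/Ñℤ)}. -/
/-!
Write `c = (0, l₁, l₂, l₃)`. A Cauchy–Schwarz (van der Corput) step eliminates the last of the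
1-bounded functions: squaring the count and substituting `n' = n + h` replaces every remaining
`f` by its multiplicative derivative `x ↦ f x · conj (f (x + (cᵢ - c_last) h))`, with `h` a new
summation variable. After three steps only `a₀` is left, differentiated along `(c₀ - c₁) h₁`,
`(c₀ - c₂) h₂`, `(c₀ - c₃) h₃`; since `ℤ/Ñℤ` is a field and the `cᵢ` are distinct these dilations
are bijective, so the eighth power of the normalized count is at most `‖a₀‖_{U³}⁸`. Permuting the
four functions gives the bound by each `‖a_j‖_{U³}`.
-/

/-- The `2^d`-th power of the Gowers `U^d` norm of `f : G → ℂ`. -/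
noncomputable def gowersExpr {G : Type*} [AddCommGroup G] [Fintype G] [DecidableEq G]
    (d : ℕ) (f : G → ℂ) : ℂ :=
  (∑ x : G, ∑ h : Fin d → G, ∏ ω : Fin d → Bool,
      (if (∑ i, if ω i then 1 else 0) % 2 = 0 then
        f (x + ∑ i, if ω i then h i else 0)
      else
        starRingEnd ℂ (f (x + ∑ i, if ω i then h i else 0)))) /
    (Fintype.card G : ℂ) ^ (d + 1)

/-- The Gowers `U^d` norm `‖f‖_{U^d}`. -/
noncomputable def gowersNorm {G : Type*} [AddCommGroup G] [Fintype G] [DecidableEq G]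
    (d : ℕ) (f : G → ℂ) : ℝ :=
  (gowersExpr d f).re ^ ((1 : ℝ) / 2 ^ d)

open Finset Fintype

@[to_additive]
theorem prod_fin_succ_pi {M α : Type*} [CommMonoid M] [Fintype α] {n : ℕ}
    (F : (Fin (n + 1) → α) → M) :
    ∏ h, F h = ∏ a, ∏ h : Fin n → α, F (Fin.cons a h) := by
  rw [← Fintype.prod_prod_type']
  exact (Fintype.prod_equiv (Fin.consEquiv fun _ => α) _ _ fun _ => rfl).symm

@[to_additive]
theorem prod_fin_three_pi {M α : Type*} [CommMonoid M] [Fintype α] (F : (Fin 3 → α) → M) :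
    ∏ h, F h = ∏ a, ∏ b, ∏ c, F ![a, b, c] := by
  simp only [prod_fin_succ_pi, Fintype.prod_unique]
  rfl

noncomputable def mulDeriv {G : Type*} [Add G] (h : G) (f : G → ℂ) (x : G) : ℂ :=
  f x * starRingEnd ℂ (f (x + h))

theorem norm_mulDeriv_le_one {G : Type*} [Add G] {f : G → ℂ} (hf : ∀ x, ‖f x‖ ≤ 1) (h x : G) :
    ‖mulDeriv h f x‖ ≤ 1 := by
  rw [mulDeriv, norm_mul, Complex.norm_conj]
  exact mul_le_one₀ (hf x) (norm_nonneg _) (hf _)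

section Gowers

variable {G : Type*} [AddCommGroup G] [Fintype G]

theorem sq_norm_sum_eq_sum_sum_mulDeriv (F : G → ℂ) :
    (‖∑ x, F x‖ : ℂ) ^ 2 = ∑ x, ∑ h, mulDeriv h F x := by
  rw [← Complex.mul_conj', sum_mul]
  refine sum_congr rfl fun x _ => ?_
  rw [← Equiv.sum_comp (Equiv.addLeft x) F, map_sum, mul_sum]
  rfl

variable [DecidableEq G]

theorem gowersExpr_three_eq (f : G → ℂ) :
    gowersExpr 3 f = (∑ h₃, ∑ h₂, ∑ h₁, ∑ x, mulDeriv h₁ (mulDeriv h₂ (mulDeriv h₃ f)) x) /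
      (card G : ℂ) ^ 4 := by
  unfold gowersExpr
  congr 1
  simp only [sum_fin_three_pi, prod_fin_three_pi, Fin.sum_univ_three, Fintype.prod_bool,
    Matrix.cons_val_zero, Matrix.cons_val_one, Matrix.cons_val_two, Matrix.head_cons,
    Matrix.tail_cons, ↓reduceIte, Bool.false_eq_true, Nat.reduceAdd, Nat.reduceMod, one_ne_zero,
    Nat.mod_self, Nat.mod_succ, Nat.zero_mod, add_zero, zero_add]
  rw [sum_comm]; refine sum_congr rfl fun h₃ _ => ?_
  rw [sum_comm]; refine sum_congr rfl fun h₂ _ => ?_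
  rw [sum_comm]; refine sum_congr rfl fun h₁ _ => sum_congr rfl fun x _ => ?_
  simp only [mulDeriv, map_mul, Complex.conj_conj, add_comm, add_left_comm]
  ring

open ComplexOrder in
theorem gowersExpr_three_nonneg (f : G → ℂ) : 0 ≤ gowersExpr 3 f := by
  have hsq : ∀ h₃ h₂ : G, ∑ h₁, ∑ x, mulDeriv h₁ (mulDeriv h₂ (mulDeriv h₃ f)) x =
      (‖∑ x, mulDeriv h₂ (mulDeriv h₃ f) x‖ : ℂ) ^ 2 := fun h₃ h₂ => by
    rw [sum_comm, sq_norm_sum_eq_sum_sum_mulDeriv]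
  rw [gowersExpr_three_eq]
  simp only [hsq]
  exact_mod_cast div_nonneg (by positivity) (by positivity)

end Gowers

theorem norm_sum_mul_sq_le {ι : Type*} [Fintype ι] {g : ι → ℂ} (hg : ∀ i, ‖g i‖ ≤ 1)
    (X : ι → ℂ) : ‖∑ i, g i * X i‖ ^ 2 ≤ card ι * ∑ i, ‖X i‖ ^ 2 := by
  have hle : ‖∑ i, g i * X i‖ ≤ ∑ i, ‖X i‖ := by
    refine (norm_sum_le _ _).trans (sum_le_sum fun i _ => ?_)
    rw [norm_mul]
    exact mul_le_of_le_one_left (norm_nonneg _) (hg i)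
  calc ‖∑ i, g i * X i‖ ^ 2 ≤ (∑ i, ‖X i‖) ^ 2 := by gcongr
    _ ≤ card ι * ∑ i, ‖X i‖ ^ 2 := sq_sum_le_card_mul_sum_sq

theorem sum_sum_comp_add {K ι M : Type*} [AddGroup K] [Fintype K] [Fintype ι]
    [AddCommMonoid M] (F : K → ι → M) (φ : ι → K) :
    ∑ m, ∑ n, F (m + φ n) n = ∑ m, ∑ n, F m n := by
  rw [sum_comm, sum_comm (f := F)]
  exact sum_congr rfl fun n _ => Equiv.sum_comp (Equiv.addRight (φ n)) (F · n)

section Pattern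

variable {K A : Type*} [CommRing K] [Fintype K] [Fintype A] {k : ℕ}

/-- The parameter `a` collects the directions of the derivatives taken in earlier
Cauchy–Schwarz steps. -/
noncomputable def patternSum (c : Fin k → K) (f : Fin k → A → K → ℂ) : ℂ :=
  ∑ a, ∑ m, ∑ n, ∏ i, f i a (m + c i * n)

noncomputable def patternDeriv (c : Fin (k + 1) → K) (f : Fin (k + 1) → A → K → ℂ) :
    Fin k → A × K → K → ℂ :=
  fun i p => mulDeriv ((c i.castSucc - c (Fin.last k)) * p.2) (f i.castSucc p.1)

theorem norm_patternSum_sq_le (c : Fin (k + 1) → K) (f : Fin (k + 1) → A → K → ℂ)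
    (hf : ∀ a x, ‖f (Fin.last k) a x‖ ≤ 1) :
    ‖patternSum c f‖ ^ 2 ≤
      card A * card K * ‖patternSum (Fin.init c) (patternDeriv c f)‖ := by
  set d : Fin k → K := fun i => c i.castSucc - c (Fin.last k)
  set G : A × K → K → ℂ := fun p n => ∏ i, f i.castSucc p.1 (p.2 + d i * n)
  have hshear : patternSum c f = ∑ p : A × K, f (Fin.last k) p.1 p.2 * ∑ n, G p n := by
    rw [patternSum, Fintype.sum_prod_type]
    refine sum_congr rfl fun a _ => ?_
    rw [← sum_sum_comp_add _ fun n => -c (Fin.last k) * n]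
    refine sum_congr rfl fun m _ => ?_
    rw [mul_sum]
    refine sum_congr rfl fun n _ => ?_
    rw [Fin.prod_univ_castSucc, mul_comm]
    congr 1
    · ring_nf
    · exact prod_congr rfl fun i _ => by simp only [d]; ring_nf
  have hexpand : ((∑ p, ‖∑ n, G p n‖ ^ 2 : ℝ) : ℂ) =
      patternSum (Fin.init c) (patternDeriv c f) := by
    have hpt : ∀ a u n h, mulDeriv h (G (a, u)) n =
        ∏ i, patternDeriv c f i (a, h) (u + -c (Fin.last k) * n + Fin.init c i * n) :=
      fun a u n h => by
        simp only [mulDeriv, G, patternDeriv, map_prod, ← prod_mul_distrib]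
        refine prod_congr rfl fun i _ => ?_
        simp only [d, Fin.init]
        ring_nf
    push_cast
    simp only [sq_norm_sum_eq_sum_sum_mulDeriv, patternSum, Fintype.sum_prod_type]
    refine sum_congr rfl fun a _ => ?_
    calc ∑ u, ∑ n, ∑ h, mulDeriv h (G (a, u)) n
        = ∑ u, ∑ h, ∑ n, mulDeriv h (G (a, u)) n := sum_congr rfl fun u _ => sum_comm
      _ = ∑ h, ∑ u, ∑ n, mulDeriv h (G (a, u)) n := sum_comm
      _ = _ := sum_congr rfl fun h _ => by
          simp only [hpt]
          exact sum_sum_comp_add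
            (fun m n => ∏ i, patternDeriv c f i (a, h) (m + Fin.init c i * n)) _
  have hcs := norm_sum_mul_sq_le (fun p => hf p.1 p.2) fun p => ∑ n, G p n
  rw [← hshear, card_prod] at hcs
  rw [← hexpand, Complex.norm_real, Real.norm_of_nonneg (by positivity)]
  push_cast at hcs
  exact hcs

theorem norm_patternSum_pow_eight_le (c : Fin 4 → K) (f : Fin 4 → A → K → ℂ)
    (hf : ∀ i ≠ 0, ∀ a x, ‖f i a x‖ ≤ 1) :
    ‖patternSum c f‖ ^ 8 ≤ card A ^ 7 * card K ^ 11 * ‖patternSum (Fin.init (Fin.init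
      (Fin.init c))) (patternDeriv (Fin.init (Fin.init c)) (patternDeriv (Fin.init c)
        (patternDeriv c f)))‖ := by
  set f₁ := patternDeriv c f
  set f₂ := patternDeriv (Fin.init c) f₁
  set f₃ := patternDeriv (Fin.init (Fin.init c)) f₂
  set M : ℝ := card A
  set N : ℝ := card K
  have h₁ : ‖patternSum c f‖ ^ 2 ≤ M * N * ‖patternSum (Fin.init c) f₁‖ :=
    norm_patternSum_sq_le c f (hf 3 (by decide))
  have h₂ : ‖patternSum (Fin.init c) f₁‖ ^ 2 ≤
      M * N ^ 2 * ‖patternSum (Fin.init (Fin.init c)) f₂‖ := by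
    have := norm_patternSum_sq_le (Fin.init c) f₁ fun p =>
      norm_mulDeriv_le_one (hf 2 (by decide) p.1) _
    simpa [mul_assoc, sq] using this
  have h₃ : ‖patternSum (Fin.init (Fin.init c)) f₂‖ ^ 2 ≤
      M * N ^ 3 * ‖patternSum (Fin.init (Fin.init (Fin.init c))) f₃‖ := by
    have := norm_patternSum_sq_le (Fin.init (Fin.init c)) f₂ fun p =>
      norm_mulDeriv_le_one (norm_mulDeriv_le_one (hf 1 (by decide) p.1.1) _) _
    simpa [mul_assoc, pow_succ] using this
  calc ‖patternSum c f‖ ^ 8 = (‖patternSum c f‖ ^ 2) ^ 4 := by ring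
    _ ≤ (M * N * ‖patternSum (Fin.init c) f₁‖) ^ 4 := by gcongr
    _ = (M * N) ^ 4 * (‖patternSum (Fin.init c) f₁‖ ^ 2) ^ 2 := by ring
    _ ≤ (M * N) ^ 4 * (M * N ^ 2 * ‖patternSum (Fin.init (Fin.init c)) f₂‖) ^ 2 := by gcongr
    _ = M ^ 6 * N ^ 8 * ‖patternSum (Fin.init (Fin.init c)) f₂‖ ^ 2 := by ring
    _ ≤ M ^ 6 * N ^ 8 * (M * N ^ 3 * ‖patternSum (Fin.init (Fin.init (Fin.init c))) f₃‖) := by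
        gcongr
    _ = M ^ 7 * N ^ 11 * ‖patternSum (Fin.init (Fin.init (Fin.init c))) f₃‖ := by ring

theorem patternSum_fin_one (c : Fin 1 → K) (f : Fin 1 → A → K → ℂ) :
    patternSum c f = card K * ∑ a, ∑ m, f 0 a m := by
  simp only [patternSum, Fin.prod_univ_one, mul_sum]
  refine sum_congr rfl fun a _ => ?_
  rw [sum_sum_comp_add (fun m _ => f 0 a m) fun n => c 0 * n]
  simp

end Pattern

section Field

variable {K : Type*} [Field K] [Fintype K] [DecidableEq K]

theorem patternSum_patternDeriv_patternDeriv_patternDeriv {A : Type*} [Fintype A]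
    (c : Fin 4 → K) (hc : Function.Injective c) (f : Fin 4 → A → K → ℂ) :
    patternSum (Fin.init (Fin.init (Fin.init c))) (patternDeriv (Fin.init (Fin.init c))
      (patternDeriv (Fin.init c) (patternDeriv c f))) =
      card K ^ 5 * ∑ a, gowersExpr 3 (f 0 a) := by
  have hd : ∀ i : Fin 4, i ≠ 0 → c 0 - c i ≠ 0 := fun i hi => sub_ne_zero.mpr (hc.ne hi.symm)
  have hdil : ∀ a, ∑ h₃, ∑ h₂, ∑ h₁, ∑ x, mulDeriv ((c 0 - c 1) * h₁)
      (mulDeriv ((c 0 - c 2) * h₂) (mulDeriv ((c 0 - c 3) * h₃) (f 0 a))) x =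
      ∑ h₃, ∑ h₂, ∑ h₁, ∑ x, mulDeriv h₁ (mulDeriv h₂ (mulDeriv h₃ (f 0 a))) x := fun a =>
    Fintype.sum_equiv (Equiv.mulLeft₀ _ (hd 3 (by decide))) _ _
      fun _ => Fintype.sum_equiv (Equiv.mulLeft₀ _ (hd 2 (by decide))) _ _
      fun _ => Fintype.sum_equiv (Equiv.mulLeft₀ _ (hd 1 (by decide))) _ _ fun _ => rfl
  rw [patternSum_fin_one]
  simp only [patternDeriv, Fin.init, Fin.castSucc_zero, Fin.reduceLast, Fin.castSucc_one,
    Fin.reduceCastSucc, Nat.reduceAdd, Fintype.sum_prod_type, hdil, gowersExpr_three_eq]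
  rw [mul_sum, mul_sum]
  refine sum_congr rfl fun a _ => ?_
  field_simp

noncomputable def patternAverage {k : ℕ} (c : Fin k → K) (f : Fin k → K → ℂ) : ℂ :=
  (∑ m, ∑ n, ∏ i, f i (m + c i * n)) / (card K : ℂ) ^ 2

theorem norm_patternAverage_le_gowersNorm_zero (c : Fin 4 → K) (hc : Function.Injective c)
    (f : Fin 4 → K → ℂ) (hf : ∀ i ≠ 0, ∀ x, ‖f i x‖ ≤ 1) :
    ‖patternAverage c f‖ ≤ gowersNorm 3 (f 0) := by
  have hG := gowersExpr_three_nonneg (f 0)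
  have hGre : ‖gowersExpr 3 (f 0)‖ = (gowersExpr 3 (f 0)).re := (Complex.re_eq_norm.mpr hG).symm
  have key := norm_patternSum_pow_eight_le c (fun i (_ : Unit) => f i) fun i hi _ => hf i hi
  rw [patternSum_patternDeriv_patternDeriv_patternDeriv c hc] at key
  simp only [Fintype.card_unit, Fintype.sum_unique, Nat.cast_one, one_pow, one_mul, norm_mul,
    norm_pow, Complex.norm_natCast, hGre] at key
  have hT : patternAverage c f = patternSum c (fun i (_ : Unit) => f i) / (card K : ℂ) ^ 2 := by
    simp [patternAverage, patternSum]
  rw [hT, norm_div, norm_pow, Complex.norm_natCast, gowersNorm,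
    show (1 : ℝ) / 2 ^ 3 = ((8 : ℕ) : ℝ)⁻¹ by norm_num,
    Real.le_rpow_inv_iff_of_pos (by positivity) (Complex.nonneg_iff.mp hG).1 (by norm_num),
    Real.rpow_natCast, div_pow, div_le_iff₀ (by positivity)]
  exact key.trans_eq (by ring)

theorem norm_patternAverage_le_gowersNorm (c : Fin 4 → K) (hc : Function.Injective c)
    (f : Fin 4 → K → ℂ) (j : Fin 4) (hf : ∀ i ≠ j, ∀ x, ‖f i x‖ ≤ 1) :
    ‖patternAverage c f‖ ≤ gowersNorm 3 (f j) := by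
  set σ := Equiv.swap 0 j
  have hσ : ∀ i ≠ 0, σ i ≠ j := fun i hi h => hi (by simpa [σ, Equiv.swap_apply_eq_iff] using h)
  have hprod : ∀ m n, ∏ i, f (σ i) (m + c (σ i) * n) = ∏ i, f i (m + c i * n) := fun m n =>
    Equiv.prod_comp σ fun i => f i (m + c i * n)
  simpa [patternAverage, hprod, σ] using norm_patternAverage_le_gowersNorm_zero (c ∘ σ)
    (hc.comp σ.injective) (f ∘ σ) fun i hi => hf (σ i) (hσ i hi)

end Field

/-- Generalized von Neumann estimate: for `Ñ` prime, `1`-bounded `a₀, a₁, a₂, a₃` on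
`ℤ/Ñℤ`, and distinct positive integers `l₁, l₂, l₃` with `l₁+l₂+l₃ < Ñ`,
`|𝔼_{m,n} a₀(m) a₁(m+l₁n) a₂(m+l₂n) a₃(m+l₃n)| ≤ min_j ‖a_j‖_{U³}`. -/
theorem stmt14 (Nt : ℕ) [NeZero Nt] (hp : Nt.Prime) (a₀ a₁ a₂ a₃ : ZMod Nt → ℂ)
    (h₀ : ∀ m, ‖a₀ m‖ ≤ 1) (h₁ : ∀ m, ‖a₁ m‖ ≤ 1)
    (h₂ : ∀ m, ‖a₂ m‖ ≤ 1) (h₃ : ∀ m, ‖a₃ m‖ ≤ 1)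
    (l₁ l₂ l₃ : ℕ) (hl₁ : 0 < l₁) (hl₂ : 0 < l₂) (hl₃ : 0 < l₃)
    (h12 : l₁ ≠ l₂) (h13 : l₁ ≠ l₃) (h23 : l₂ ≠ l₃)
    (hsum : l₁ + l₂ + l₃ < Nt) :
    ‖(∑ m : ZMod Nt, ∑ n : ZMod Nt,
        a₀ m * a₁ (m + (l₁ : ZMod Nt) * n) * a₂ (m + (l₂ : ZMod Nt) * n) *
          a₃ (m + (l₃ : ZMod Nt) * n)) / (Nt : ℂ) ^ 2‖ ≤
      min (min (gowersNorm 3 a₀) (gowersNorm 3 a₁))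
        (min (gowersNorm 3 a₂) (gowersNorm 3 a₃)) := by
  have := Fact.mk hp
  set L : Fin 4 → ℕ := ![0, l₁, l₂, l₃]
  set a : Fin 4 → ZMod Nt → ℂ := ![a₀, a₁, a₂, a₃]
  have hL : ∀ i, L i < Nt := by intro i; fin_cases i <;> simp [L] <;> omega
  have hLinj : Function.Injective L := by
    intro i j; fin_cases i <;> fin_cases j <;> simp [L] <;> omega
  have hc : Function.Injective fun i => (L i : ZMod Nt) := fun i j hij => hLinj <| by
    rw [← ZMod.val_natCast_of_lt (hL i), ← ZMod.val_natCast_of_lt (hL j)]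
    exact congrArg ZMod.val hij
  have ha : ∀ i x, ‖a i x‖ ≤ 1 := by
    intro i; fin_cases i <;> assumption
  have hbound := fun j => norm_patternAverage_le_gowersNorm _ hc a j fun i _ => ha i
  simp only [patternAverage, Fin.prod_univ_four, ZMod.card, L, a, Matrix.cons_val_zero,
    Matrix.cons_val_one, Matrix.cons_val_two, Matrix.cons_val_three, Nat.cast_zero, zero_mul,
    add_zero] at hbound
  exact le_min (le_min (hbound 0) (hbound 1)) (le_min (hbound 2) (hbound 3))
end

section
/- Let E ⊆ ℕ and let (Φ_N) be a multiplicative Følner sequence in (ℕ, ·) with d_mult(E) := limsup_N |E ∩ Φ_N|/|Φ_N| > 0. Then there exist a probability measure-preserving action T of the group (ℚ⁺, ·) on a probability space (X, B, μ) and a measurable set A with μ(A) = d_mult(E), such that for every k ∈ ℕ and n₁, …, n_k ∈ ℕ: d_mult(n₁⁻¹E ∩ … ∩ n_k⁻¹E) ≥ μ(T_{n₁}⁻¹A ∩ … ∩ T_{n_k}⁻¹A). -/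
/-!
Encode `m ∈ ℕ` as the point `x_m ∈ {0,1}^{ℚ>0}` with `x_m(q) = 1_E(q m)`, on which `ℚ>0` acts by
the shifts `(T_q x)(r) = x(q r)`. Then `T_n x_m = x_{n m}` and `x_m ∈ A := {x | x 1 = true}` iff
`m ∈ E`. Let `μ` be a weak limit, along an ultrafilter realising the limsup defining `d_mult(E)`, of
the uniform measures on `{x_m : m ∈ Φ_N}`. Clopen sets have empty boundary, so `μ(C)` is the limit
of the frequencies of `C` along the ultrafilter; this gives `μ(A) = d_mult(E)` and the inequality
for `T_{n₁}⁻¹A ∩ … ∩ T_{n_k}⁻¹A`, since a limit along an ultrafilter finer than `atTop` is at most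
the limsup. The Følner property makes `μ` invariant under `T_n` on cylinder sets, hence
`T_n`-invariant, and `T_{a/b} = T_a ∘ T_b⁻¹` extends this to all of `ℚ>0`.
-/

open MeasureTheory
open scoped symmDiff

/-- The multiplicative (upper) density of `E ⊆ ℕ` relative to the sequence of finite sets
`Φ`: `limsup_N |E ∩ Φ_N| / |Φ_N|`. -/
noncomputable def multDensity (Φ : ℕ → Finset ℕ) (E : Set ℕ) : ℝ :=
  Filter.limsup
    (fun N => (∑ m ∈ Φ N, Set.indicator E (fun _ => (1 : ℝ)) m) / (Φ N).card)
    Filter.atTop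

open Filter Topology Finset

local notation "ℚ>0" => {q : ℚ // 0 < q}

theorem abs_sum_sub_sum_le_card_symmDiff {ι : Type*} [DecidableEq ι] (s t : Finset ι)
    {g : ι → ℝ} (hg : ∀ i, |g i| ≤ 1) :
    |∑ i ∈ s, g i - ∑ i ∈ t, g i| ≤ #(s ∆ t) := by
  have hle : ∀ u : Finset ι, |∑ i ∈ u, g i| ≤ #u := fun u =>
    (abs_sum_le_sum_abs _ _).trans <| by simpa using Finset.sum_le_sum fun i _ => hg i
  rw [← Finset.sum_sdiff_sub_sum_sdiff, Finset.symmDiff_def,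
    card_union_of_disjoint disjoint_sdiff_sdiff, Nat.cast_add]
  exact (abs_sub _ _).trans (add_le_add (hle _) (hle _))

section Shift

variable {G α : Type*}

def shift [Mul G] (g : G) (x : G → α) : G → α := fun h => x (g * h)

theorem shift_one [MulOneClass G] : shift (1 : G) = (id : (G → α) → G → α) := by
  funext x h
  simp [shift]

theorem shift_mul [CommSemigroup G] (g g' : G) :
    shift (g * g') = (shift g ∘ shift g' : (G → α) → G → α) := by
  funext x h
  simp only [shift, Function.comp_apply, mul_left_comm g' g h, mul_assoc]

theorem continuous_shift [Mul G] [TopologicalSpace α] (g : G) :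
    Continuous (shift g : (G → α) → G → α) :=
  continuous_pi fun h => continuous_apply (g * h)

end Shift

theorem isClopen_of_mem_measurableCylinders {ι α : Type*} [TopologicalSpace α]
    [DiscreteTopology α] [MeasurableSpace α] {C : Set (ι → α)}
    (hC : C ∈ measurableCylinders fun _ => α) : IsClopen C := by
  obtain ⟨s, t, -, rfl⟩ := (mem_measurableCylinders C).1 hC
  exact (isClopen_discrete t).preimage (continuous_pi fun i => continuous_apply _)

section Empirical

variable {ι X : Type*} [MeasurableSpace ι] [DiscreteMeasurableSpace ι] [MeasurableSpace X]

noncomputable def empiricalMeasure (s : Finset ι) (hs : s.Nonempty) (f : ι → X) :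
    ProbabilityMeasure X :=
  ⟨(PMF.uniformOfFinset s hs).toMeasure.map f,
    Measure.isProbabilityMeasure_map Measurable.of_discrete.aemeasurable⟩

theorem empiricalMeasure_apply (s : Finset ι) (hs : s.Nonempty) (f : ι → X) {S : Set X}
    (hS : MeasurableSet S) :
    (empiricalMeasure s hs f S : ℝ) = (∑ i ∈ s, (f ⁻¹' S).indicator (fun _ => (1 : ℝ)) i) / #s := by
  classical
  rw [← ENNReal.coe_toReal, ProbabilityMeasure.ennreal_coeFn_eq_coeFn_toMeasure]
  change ((PMF.uniformOfFinset s hs).toMeasure.map f S).toReal = _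
  rw [Measure.map_apply Measurable.of_discrete hS,
    PMF.toMeasure_uniformOfFinset_apply hs _ MeasurableSet.of_discrete]
  simp [Set.indicator_apply, Finset.sum_boole]

end Empirical

open Classical in
noncomputable def orbitPoint (E : Set ℕ) (m : ℕ) : ℚ>0 → Bool :=
  fun q => decide ((q : ℚ) * m ∈ ((↑) : ℕ → ℚ) '' E)

theorem orbitPoint_natCast_apply (E : Set ℕ) (m : ℕ) {a : ℕ} (ha : 0 < a) :
    orbitPoint E m ⟨a, Nat.cast_pos.2 ha⟩ = true ↔ a * m ∈ E := by
  simp only [orbitPoint, decide_eq_true_eq, ← Nat.cast_mul, Set.mem_image, Nat.cast_inj]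
  exact ⟨fun ⟨n, hn, h⟩ => h ▸ hn, fun h => ⟨_, h, rfl⟩⟩

theorem orbitPoint_one_apply (E : Set ℕ) (m : ℕ) : orbitPoint E m 1 = true ↔ m ∈ E := by
  have h1 : (1 : ℚ>0) = ⟨((1 : ℕ) : ℚ), Nat.cast_pos.2 one_pos⟩ := Subtype.ext Nat.cast_one.symm
  rw [h1, orbitPoint_natCast_apply E m one_pos, one_mul]

theorem orbitPoint_preimage_setOf_one (E : Set ℕ) : orbitPoint E ⁻¹' {x | x 1 = true} = E :=
  Set.ext (orbitPoint_one_apply E)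

theorem shift_orbitPoint (E : Set ℕ) {a : ℕ} (ha : 0 < a) (m : ℕ) :
    shift ⟨(a : ℚ), Nat.cast_pos.2 ha⟩ (orbitPoint E m) = orbitPoint E (a * m) := by
  funext q
  simp only [shift, orbitPoint, Positive.val_mul]
  congr 2
  push_cast
  ring

theorem orbitPoint_preimage_iInter {k : ℕ} (E : Set ℕ) (n : Fin k → ℕ) (hn : ∀ i, 0 < n i) :
    orbitPoint E ⁻¹' ⋂ i, shift ⟨(n i : ℚ), Nat.cast_pos.2 (hn i)⟩ ⁻¹' {x | x 1 = true} =
      ⋂ i, {m | n i * m ∈ E} := by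
  ext m
  simp only [Set.mem_preimage, Set.mem_iInter]
  refine forall_congr' fun i => ?_
  rw [shift_orbitPoint E (hn i)]
  exact orbitPoint_one_apply E _

theorem abs_empiricalMeasure_shift_preimage_sub_le (E : Set ℕ) {s : Finset ℕ} (hs : s.Nonempty)
    {a : ℕ} (ha : 0 < a) {S : Set (ℚ>0 → Bool)} (hS : MeasurableSet S) :
    |(empiricalMeasure s hs (orbitPoint E) (shift ⟨(a : ℚ), Nat.cast_pos.2 ha⟩ ⁻¹' S) : ℝ) -
        empiricalMeasure s hs (orbitPoint E) S| ≤ #(s.image (a * ·) ∆ s) / #s := by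
  classical
  have hsum :
      ∑ m ∈ s, (orbitPoint E ⁻¹' (shift ⟨(a : ℚ), Nat.cast_pos.2 ha⟩ ⁻¹' S)).indicator
        (fun _ => (1 : ℝ)) m =
      ∑ m ∈ s.image (a * ·), (orbitPoint E ⁻¹' S).indicator (fun _ => 1) m := by
    rw [sum_image fun x _ y _ h => Nat.eq_of_mul_eq_mul_left ha h]
    refine sum_congr rfl fun m _ => ?_
    simp only [Set.indicator_apply, Set.mem_preimage, shift_orbitPoint E ha]
  rw [empiricalMeasure_apply _ _ _ hS,
    empiricalMeasure_apply _ _ _ ((continuous_shift _).measurable hS), hsum, ← sub_div, abs_div,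
    Nat.abs_cast]
  gcongr
  exact abs_sum_sub_sum_le_card_symmDiff _ _ fun m => by
    by_cases h : m ∈ orbitPoint E ⁻¹' S <;> simp [h]

theorem measurePreserving_of_tendsto_of_isClopen {ι β : Type*} [Countable ι] {L : Filter β}
    [L.NeBot] {μs : β → ProbabilityMeasure (ι → Bool)} {μ : ProbabilityMeasure (ι → Bool)}
    (hμ : Tendsto μs L (𝓝 μ)) {T : (ι → Bool) → ι → Bool} (hT : Continuous T)
    (hinv : ∀ C, IsClopen C → Tendsto (fun b => (μs b (T ⁻¹' C) : ℝ) - μs b C) L (𝓝 0)) :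
    MeasurePreserving T μ μ := by
  have hlim : ∀ C, IsClopen C → Tendsto (fun b => (μs b C : ℝ)) L (𝓝 (μ C)) := fun C hC =>
    NNReal.tendsto_coe.2 (ProbabilityMeasure.tendsto_measure_of_isClopen_of_tendsto hμ hC)
  refine ⟨hT.measurable, ext_of_generate_finite _ generateFrom_measurableCylinders.symm
    isPiSystem_measurableCylinders (fun C hC => ?_)
    (by rw [Measure.map_apply hT.measurable MeasurableSet.univ, Set.preimage_univ])⟩
  have hC := isClopen_of_mem_measurableCylinders hC
  have h : (μ (T ⁻¹' C) : ℝ) = μ C := tendsto_nhds_unique (hlim _ (hC.preimage hT)) <| by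
    simpa using (hinv C hC).add (hlim C hC)
  rw [Measure.map_apply hT.measurable hC.isOpen.measurableSet,
    ← ProbabilityMeasure.ennreal_coeFn_eq_coeFn_toMeasure,
    ← ProbabilityMeasure.ennreal_coeFn_eq_coeFn_toMeasure, NNReal.coe_inj.1 h]

theorem exists_natCast_mul_inv_eq (q : ℚ>0) :
    ∃ (a b : ℕ) (ha : 0 < a) (hb : 0 < b),
      q = ⟨(a : ℚ), Nat.cast_pos.2 ha⟩ * ⟨(b : ℚ), Nat.cast_pos.2 hb⟩⁻¹ := by
  have hnum : 0 < q.1.num := Rat.num_pos.2 q.2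
  refine ⟨q.1.num.toNat, q.1.den, by omega, q.1.den_pos, Subtype.ext ?_⟩
  have hcast : ((q.1.num.toNat : ℕ) : ℚ) = q.1.num := by
    exact_mod_cast Int.toNat_of_nonneg hnum.le
  change (q : ℚ) = (q.1.num.toNat : ℚ) * (q.1.den : ℚ)⁻¹
  rw [hcast, ← div_eq_mul_inv]
  exact (Rat.num_div_den _).symm

theorem measurePreserving_of_forall_natCast {X : Type*} [MeasurableSpace X] {μ : Measure X}
    {T : ℚ>0 → X → X} (hT : ∀ q, Measurable (T q)) (hone : T 1 = id)
    (hmul : ∀ q q', T (q * q') = T q ∘ T q')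
    (hnat : ∀ (n : ℕ) (hn : 0 < n), MeasurePreserving (T ⟨(n : ℚ), Nat.cast_pos.2 hn⟩) μ μ)
    (q : ℚ>0) : MeasurePreserving (T q) μ μ := by
  have hinv (q : ℚ>0) (hq : MeasurePreserving (T q) μ μ) : MeasurePreserving (T q⁻¹) μ μ := by
    refine ⟨hT _, ?_⟩
    conv_lhs => rw [← hq.map_eq]
    rw [Measure.map_map (hT _) (hT _), ← hmul, inv_mul_cancel, hone, Measure.map_id]
  obtain ⟨a, b, ha, hb, rfl⟩ := exists_natCast_mul_inv_eq q
  rw [hmul]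
  exact (hnat a ha).comp (hinv _ (hnat b hb))

namespace MeasureTheory.ProbabilityMeasure

variable {β X : Type*} [TopologicalSpace X] [MeasurableSpace X] [OpensMeasurableSpace X]
  [HasOuterApproxClosed X] {f : Filter β}

theorem apply_le_limsup_of_tendsto {μs : β → ProbabilityMeasure X} {U : Ultrafilter β}
    (hU : ↑U ≤ f) {μ : ProbabilityMeasure X} (hμ : Tendsto μs U (𝓝 μ)) {C : Set X}
    (hC : IsClopen C) :
    (μ C : ℝ) ≤ limsup (fun b => (μs b C : ℝ)) f :=
  (mapClusterPt_iff_ultrafilter.2 ⟨U, hU, NNReal.tendsto_coe.2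
    (tendsto_measure_of_isClopen_of_tendsto hμ hC)⟩).le_limsup
    (isBoundedUnder_of ⟨1, fun b => by exact_mod_cast (μs b).apply_le_one C⟩)

theorem exists_ultrafilter_tendsto_apply_eq_limsup [CompactSpace X] [T2Space X] [BorelSpace X]
    [f.NeBot] (μs : β → ProbabilityMeasure X) {C : Set X} (hC : IsClopen C) :
    ∃ U : Ultrafilter β, ↑U ≤ f ∧ ∃ μ : ProbabilityMeasure X, Tendsto μs U (𝓝 μ) ∧
      (μ C : ℝ) = limsup (fun b => (μs b C : ℝ)) f := by
  have hcobdd : IsCoboundedUnder (· ≤ ·) f fun b => (μs b C : ℝ) :=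
    (isBoundedUnder_of ⟨0, fun b => (μs b C).2⟩).isCoboundedUnder_le
  have hbdd : IsBoundedUnder (· ≤ ·) f fun b => (μs b C : ℝ) :=
    isBoundedUnder_of ⟨1, fun b => by exact_mod_cast (μs b).apply_le_one C⟩
  obtain ⟨U, hU, hUC⟩ := mapClusterPt_iff_ultrafilter.1 (MapClusterPt.limsup hcobdd hbdd)
  have hμ : Tendsto μs U (𝓝 (U.map μs).lim) := Ultrafilter.le_nhds_lim _
  exact ⟨U, hU, _, hμ, tendsto_nhds_unique (NNReal.tendsto_coe.2
    (tendsto_measure_of_isClopen_of_tendsto hμ hC)) hUC⟩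

end MeasureTheory.ProbabilityMeasure

theorem multDensity_eq_limsup_empiricalMeasure {X : Type*} [MeasurableSpace X]
    {Φ : ℕ → Finset ℕ} (hne : ∀ N, (Φ N).Nonempty) (f : ℕ → X) {S : Set X}
    (hS : MeasurableSet S) :
    multDensity Φ (f ⁻¹' S) = limsup (fun N => (empiricalMeasure (Φ N) (hne N) f S : ℝ)) atTop := by
  simp only [multDensity, empiricalMeasure_apply _ _ _ hS]

/-- Furstenberg correspondence principle for the multiplicative semigroup: given a
multiplicative Følner sequence `Φ` and `E ⊆ ℕ`, there are a measure-preserving action `T`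
of `(ℚ⁺, ·)` on a probability space `(X, μ)` and a measurable set `A` with
`μ(A) = d_mult(E)`, such that for all `n₁, …, n_k ∈ ℕ`,
`d_mult(n₁⁻¹E ∩ … ∩ n_k⁻¹E) ≥ μ(T_{n₁}⁻¹A ∩ … ∩ T_{n_k}⁻¹A)`. -/
theorem stmt15 (Φ : ℕ → Finset ℕ)
    (hne : ∀ N, (Φ N).Nonempty)
    (hFolner : ∀ a : ℕ, 0 < a →
      Filter.Tendsto
        (fun N => ((((Φ N).image (a * ·)) ∆ (Φ N)).card : ℝ) / (Φ N).card)
        Filter.atTop (nhds 0))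
    (E : Set ℕ) :
    ∃ (X : Type) (_ : MeasurableSpace X) (μ : Measure X) (_ : IsProbabilityMeasure μ)
      (T : {q : ℚ // 0 < q} → X → X),
      (∀ q, MeasurePreserving (T q) μ μ) ∧
      (T 1 = id) ∧
      (∀ q q', T (q * q') = T q ∘ T q') ∧
      ∃ A : Set X, MeasurableSet A ∧ (μ A).toReal = multDensity Φ E ∧
        ∀ (k : ℕ) (n : Fin k → ℕ) (hn : ∀ i, 0 < n i),
          (μ (⋂ i, T ⟨((n i : ℕ) : ℚ), by exact_mod_cast hn i⟩ ⁻¹' A)).toReal ≤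
            multDensity Φ (⋂ i, {m : ℕ | n i * m ∈ E}) := by
  set μs : ℕ → ProbabilityMeasure (ℚ>0 → Bool) :=
    fun N => empiricalMeasure (Φ N) (hne N) (orbitPoint E)
  set A : Set (ℚ>0 → Bool) := {x | x 1 = true}
  have hA : IsClopen A := (isClopen_discrete {true}).preimage (continuous_apply 1)
  obtain ⟨U, hUle, μ, hμ, hμA⟩ :=
    ProbabilityMeasure.exists_ultrafilter_tendsto_apply_eq_limsup (f := atTop) μs hA
  have hnat (n : ℕ) (hn : 0 < n) : MeasurePreserving
      (shift (⟨(n : ℚ), Nat.cast_pos.2 hn⟩ : ℚ>0)) (μ : Measure (ℚ>0 → Bool)) μ :=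
    measurePreserving_of_tendsto_of_isClopen hμ (continuous_shift _) fun C hC =>
      squeeze_zero_norm (fun N => abs_empiricalMeasure_shift_preimage_sub_le E (hne N) hn
        hC.isOpen.measurableSet) ((hFolner n hn).mono_left hUle)
  refine ⟨_, _, μ, inferInstance, shift,
    measurePreserving_of_forall_natCast (fun q => (continuous_shift q).measurable) shift_one
      shift_mul hnat, shift_one, shift_mul, A, hA.isOpen.measurableSet, ?_, fun k n hn => ?_⟩
  · rw [← measureReal_def, ProbabilityMeasure.measureReal_eq_coe_coeFn, hμA,
      ← orbitPoint_preimage_setOf_one E, multDensity_eq_limsup_empiricalMeasure hne _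
      hA.isOpen.measurableSet]
  · have hC : IsClopen (⋂ i, shift (⟨(n i : ℚ), Nat.cast_pos.2 (hn i)⟩ : ℚ>0) ⁻¹' A) :=
      isClopen_iInter_of_finite fun i => hA.preimage (continuous_shift _)
    rw [← measureReal_def, ProbabilityMeasure.measureReal_eq_coe_coeFn,
      ← orbitPoint_preimage_iInter E n hn,
      multDensity_eq_limsup_empiricalMeasure hne _ hC.isOpen.measurableSet]
    exact ProbabilityMeasure.apply_le_limsup_of_tendsto hUle hμ hC
end
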